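/- Fix integers m ≥ 2 and k with 1 ≤ k ≤ m, and let 0 ≤ r ≤ k − 1. Then the number of code words of length k over base dimension m whose last set A_k has cardinality r equals the number of increasing trees on the vertex set {0, 1, …, k} in which the root 0 has degree r + 1; here an increasing tree is a tree (connected acyclic graph) on {0, 1, …, k} in which every vertex v ≠ 0 has exactly one neighbor with a smaller label (equivalently, labels increase along every path moving away from the root 0). -/

import Mathlib

/-- A code word of length `k` over base dimension `m`: a sequence
`A 1, A 2, …, A k` of finite sets of integers, each contained in `{2, 3, …}`,
such that `A 1 = ∅`, for each `2 ≤ j ≤ k` we have `A j ⊆ A (j-1) ∪ {j}`,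
and `|A j| ≤ m - 1` for all `j`.  (We normalize `A i = ∅` outside `1 ≤ i ≤ k`.) -/
def IsCodeWord (m k : ℕ) (A : ℕ → Finset ℕ) : Prop :=
  A 1 = ∅ ∧
  (∀ i, 1 ≤ i → i ≤ k → ∀ x ∈ A i, 2 ≤ x) ∧
  (∀ j, 2 ≤ j → j ≤ k → A j ⊆ A (j - 1) ∪ {j}) ∧
  (∀ i, 1 ≤ i → i ≤ k → (A i).card ≤ m - 1) ∧
  (∀ i, i = 0 ∨ k < i → A i = ∅)

/-- `multCW k A j` is `n_j`: the number of indices `i` (with `1 ≤ i ≤ k`)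
such that `j ∈ A i`. -/
def multCW (k : ℕ) (A : ℕ → Finset ℕ) (j : ℕ) : ℕ :=
  ((Finset.Icc 1 k).filter (fun i => j ∈ A i)).card

/-- `N m k r` is the number of code words of length `k` over base dimension `m`
whose last set `A k` has cardinality `r`. -/
noncomputable def N (m k r : ℕ) : ℕ :=
  {A : ℕ → Finset ℕ | IsCodeWord m k A ∧ (A k).card = r}.ncard

/-- An increasing tree on the vertex set `{0, 1, …, k}` (as `Fin (k+1)`):
a tree in which every vertex `v ≠ 0` has exactly one neighbor with a smaller
label, i.e. labels increase along every path moving away from the root `0`. -/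
def IsIncreasingTree {k : ℕ} (G : SimpleGraph (Fin (k + 1))) : Prop :=
  G.IsTree ∧ ∀ v : Fin (k + 1), v ≠ 0 → ∃! w : Fin (k + 1), G.Adj v w ∧ w < v

/-!
For a code word, the steps `i` with `j ∈ A i` form an initial segment of `[j, k]`: `j` can only
enter at step `j`, and once dropped it never returns. So the word is determined by the deficits
`d j = #{i ∈ [j, k] | j ∉ A i}`, namely `j ∈ A i ↔ j ≤ i ∧ i + d j ≤ k`, and every choice of
`d j ∈ [0, k + 1 - j]` for `2 ≤ j ≤ k` occurs (for `k ≤ m` the bound `|A i| ≤ m - 1` is automatic).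
An increasing tree is determined by its parent function, where the parent of `v` is any of
`0, …, v - 1`. Letting the parent of `k + 2 - j` be `d j` matches the choices, and the children
of the root are `1` together with the `k + 2 - j` for which `d j = 0`, i.e. `j ∈ A k`.
-/

open Finset

lemma SimpleGraph.ext_of_adj_of_lt {V : Type*} [LinearOrder V] {G H : SimpleGraph V}
    (h : ∀ v w, w < v → (G.Adj v w ↔ H.Adj v w)) : G = H := by
  ext v w
  rcases lt_trichotomy v w with hvw | rfl | hvw
  · rw [G.adj_comm, H.adj_comm]
    exact h w v hvw
  · simp
  · exact h v w hvw

section ParentGraph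

variable {n : ℕ} {p q : Fin (n + 1) → Fin (n + 1)}

def parentGraph (p : Fin (n + 1) → Fin (n + 1)) : SimpleGraph (Fin (n + 1)) :=
  SimpleGraph.fromRel fun v w => v ≠ 0 ∧ p v = w

lemma parentGraph_adj_of_lt (hp : ∀ v, v ≠ 0 → p v < v) {v w : Fin (n + 1)} (hwv : w < v) :
    (parentGraph p).Adj v w ↔ p v = w := by
  have hv : v ≠ 0 := Fin.ne_zero_of_lt hwv
  simp only [parentGraph, SimpleGraph.fromRel_adj, hwv.ne', ne_eq, hv, not_false_eq_true,
    true_and]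
  refine ⟨fun h => h.resolve_right ?_, Or.inl⟩
  rintro ⟨hw, rfl⟩
  exact (hp w hw).not_gt hwv

lemma parentGraph_inj (hp : ∀ v, v ≠ 0 → p v < v) (hq : ∀ v, v ≠ 0 → q v < v) :
    parentGraph p = parentGraph q ↔ ∀ v, v ≠ 0 → p v = q v := by
  refine ⟨fun h v hv => ?_, fun h => SimpleGraph.ext_of_adj_of_lt fun v w hwv => ?_⟩
  · have hadj : (parentGraph q).Adj v (p v) := h ▸ (parentGraph_adj_of_lt hp (hp v hv)).2 rfl
    exact ((parentGraph_adj_of_lt hq (hp v hv)).1 hadj).symm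
  · have hv : v ≠ 0 := Fin.ne_zero_of_lt hwv
    rw [parentGraph_adj_of_lt hp hwv, parentGraph_adj_of_lt hq hwv, h v hv]

lemma parentGraph_reachable_zero (hp : ∀ v, v ≠ 0 → p v < v) (v : Fin (n + 1)) :
    (parentGraph p).Reachable v 0 := by
  induction v using WellFoundedLT.induction with
  | _ v ih =>
    rcases eq_or_ne v 0 with rfl | hv
    · rfl
    · exact ((parentGraph_adj_of_lt hp (hp v hv)).2 rfl).reachable.trans (ih _ (hp v hv))

lemma parentGraph_connected (hp : ∀ v, v ≠ 0 → p v < v) : (parentGraph p).Connected :=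
  (SimpleGraph.connected_iff _).2 ⟨fun u v => (parentGraph_reachable_zero hp u).trans
    (parentGraph_reachable_zero hp v).symm, ⟨0⟩⟩

lemma edgeSet_parentGraph (hp : ∀ v, v ≠ 0 → p v < v) :
    (parentGraph p).edgeSet = (fun v => s(v, p v)) '' {v | v ≠ 0} := by
  ext e
  induction e using Sym2.ind with
  | _ v w =>
    simp only [SimpleGraph.mem_edgeSet, parentGraph, SimpleGraph.fromRel_adj, Set.mem_image,
      Set.mem_ofPred_eq]
    constructor
    · rintro ⟨-, ⟨hv, rfl⟩ | ⟨hw, rfl⟩⟩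
      · exact ⟨v, hv, rfl⟩
      · exact ⟨w, hw, Sym2.eq_swap⟩
    · rintro ⟨x, hx, hxe⟩
      rcases Sym2.eq_iff.1 hxe with ⟨rfl, rfl⟩ | ⟨rfl, rfl⟩
      · exact ⟨(hp x hx).ne', Or.inl ⟨hx, rfl⟩⟩
      · exact ⟨(hp x hx).ne, Or.inr ⟨hx, rfl⟩⟩

lemma card_edgeSet_parentGraph (hp : ∀ v, v ≠ 0 → p v < v) :
    Nat.card (parentGraph p).edgeSet = n := by
  rw [Nat.card_coe_set_eq, edgeSet_parentGraph hp, Set.InjOn.ncard_image]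
  · simp [Set.ncard_eq_toFinset_card', Finset.filter_ne']
  · intro v hv w hw hvw
    rcases Sym2.eq_iff.1 hvw with ⟨h, -⟩ | ⟨hvpw, hpvw⟩
    · exact h
    · have hwv : w < v := hpvw ▸ hp v hv
      have hvw : v < w := hvpw ▸ hp w hw
      exact absurd hwv hvw.not_gt

lemma isIncreasingTree_parentGraph (hp : ∀ v, v ≠ 0 → p v < v) :
    IsIncreasingTree (parentGraph p) := by
  refine ⟨SimpleGraph.isTree_iff_connected_and_card.2
    ⟨parentGraph_connected hp, by simp [card_edgeSet_parentGraph hp]⟩, fun v hv => ?_⟩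
  refine ⟨p v, ⟨(parentGraph_adj_of_lt hp (hp v hv)).2 rfl, hp v hv⟩, ?_⟩
  rintro w ⟨hadj, hwv⟩
  exact ((parentGraph_adj_of_lt hp hwv).1 hadj).symm

lemma neighborSet_parentGraph_zero (hp : ∀ v, v ≠ 0 → p v < v) :
    (parentGraph p).neighborSet 0 = {v | v ≠ 0 ∧ p v = 0} := by
  ext v
  rcases eq_or_ne v 0 with rfl | hv
  · simp
  · rw [SimpleGraph.mem_neighborSet, SimpleGraph.adj_comm,
      parentGraph_adj_of_lt hp (Fin.pos_iff_ne_zero.2 hv)]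
    simp [hv]

end ParentGraph

lemma IsIncreasingTree.exists_parentGraph_eq {n : ℕ} {G : SimpleGraph (Fin (n + 1))}
    (hG : IsIncreasingTree G) : ∃ p, (∀ v, v ≠ 0 → p v < v) ∧ parentGraph p = G := by
  choose! p hp hpu using hG.2
  refine ⟨p, fun v hv => (hp v hv).2, SimpleGraph.ext_of_adj_of_lt fun v w hwv => ?_⟩
  have hv : v ≠ 0 := Fin.ne_zero_of_lt hwv
  rw [parentGraph_adj_of_lt (fun v hv => (hp v hv).2) hwv]
  exact ⟨fun h => h ▸ (hp v hv).1, fun h => (hpu v hv w ⟨h, hwv⟩).symm⟩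

def deficit (k : ℕ) (A : ℕ → Finset ℕ) (j : ℕ) : ℕ :=
  #{i ∈ Icc j k | j ∉ A i}

lemma deficit_le (k : ℕ) (A : ℕ → Finset ℕ) (j : ℕ) : deficit k A j ≤ k + 1 - j :=
  (card_filter_le _ _).trans_eq (Nat.card_Icc j k)

def ofDeficit (k : ℕ) (d : ℕ → ℕ) (i : ℕ) : Finset ℕ :=
  {j ∈ Icc 2 i | i + d j ≤ k}

lemma isCodeWord_ofDeficit {m k : ℕ} (hkm : k ≤ m) (d : ℕ → ℕ) :
    IsCodeWord m k (ofDeficit k d) := by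
  refine ⟨?_, ?_, ?_, ?_, ?_⟩
  · simp [ofDeficit]
  · intro i _ _ x hx
    simp only [ofDeficit, mem_filter, mem_Icc] at hx
    exact hx.1.1
  · intro j _ _ x hx
    simp only [ofDeficit, mem_filter, mem_Icc, mem_union, mem_singleton] at hx ⊢
    omega
  · intro i _ hik
    have := card_le_card (filter_subset (fun j => i + d j ≤ k) (Icc 2 i))
    rw [Nat.card_Icc] at this
    unfold ofDeficit
    omega
  · rintro i hi
    ext j
    simp only [ofDeficit, mem_filter, mem_Icc, notMem_empty, iff_false]
    omega

lemma deficit_ofDeficit {k : ℕ} {d : ℕ → ℕ} {j : ℕ} (hj : 2 ≤ j) (hdj : d j + j ≤ k + 1) :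
    deficit k (ofDeficit k d) j = d j := by
  have : {i ∈ Icc j k | j ∉ ofDeficit k d i} = Icc (k + 1 - d j) k := by
    ext i
    simp only [ofDeficit, mem_filter, mem_Icc]
    omega
  rw [deficit, this, Nat.card_Icc]
  omega

def codeParent (k : ℕ) (A : ℕ → Finset ℕ) (v : Fin (k + 1)) : Fin (k + 1) :=
  ⟨deficit k A (k + 2 - v), (deficit_le k A _).trans_lt (by have := v.isLt; omega)⟩

lemma codeParent_val (k : ℕ) (A : ℕ → Finset ℕ) (v : Fin (k + 1)) :
    (codeParent k A v : ℕ) = deficit k A (k + 2 - v) :=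
  rfl

lemma codeParent_lt (k : ℕ) (A : ℕ → Finset ℕ) {v : Fin (k + 1)} (hv : v ≠ 0) :
    codeParent k A v < v := by
  have hv' := Fin.val_ne_zero_iff.2 hv
  have := deficit_le k A (k + 2 - v)
  rw [Fin.lt_def, codeParent_val]
  omega

namespace IsCodeWord

variable {m k : ℕ} {A B : ℕ → Finset ℕ}

lemma mem_bounds (hA : IsCodeWord m k A) {i x : ℕ} (hx : x ∈ A i) : 1 ≤ i ∧ i ≤ k ∧ 2 ≤ x := by
  have hi : ¬(i = 0 ∨ k < i) := fun h => by simp [hA.2.2.2.2 i h] at hx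
  exact ⟨by omega, by omega, hA.2.1 i (by omega) (by omega) x hx⟩

lemma mem_of_mem_succ (hA : IsCodeWord m k A) {i x : ℕ} (hx : x ∈ A (i + 1)) (hxi : x ≠ i + 1) :
    x ∈ A i := by
  obtain ⟨-, hik, -⟩ := hA.mem_bounds hx
  rcases Nat.eq_zero_or_pos i with rfl | hi
  · simp [hA.1] at hx
  · simpa [hxi] using hA.2.2.1 (i + 1) (by omega) hik hx

lemma le_of_mem (hA : IsCodeWord m k A) {i x : ℕ} (hx : x ∈ A i) : x ≤ i := by
  induction i with
  | zero => simp [hA.2.2.2.2 0 (Or.inl rfl)] at hx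
  | succ i ih =>
    rcases eq_or_ne x (i + 1) with rfl | hxi
    · rfl
    · exact (ih (hA.mem_of_mem_succ hx hxi)).trans i.le_succ

lemma mem_of_le_of_mem (hA : IsCodeWord m k A) {i i' x : ℕ} (hx : x ∈ A i) (hxi' : x ≤ i')
    (hi'i : i' ≤ i) : x ∈ A i' := by
  induction i with
  | zero => simp [hA.2.2.2.2 0 (Or.inl rfl)] at hx
  | succ i ih =>
    rcases eq_or_lt_of_le hi'i with rfl | hlt
    · exact hx
    · exact ih (hA.mem_of_mem_succ hx (by omega)) (by omega)

lemma mem_iff (hA : IsCodeWord m k A) {i j : ℕ} :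
    j ∈ A i ↔ 2 ≤ j ∧ j ≤ i ∧ i + deficit k A j ≤ k := by
  constructor
  · intro hj
    obtain ⟨-, hik, h2j⟩ := hA.mem_bounds hj
    have hsub : {i' ∈ Icc j k | j ∉ A i'} ⊆ Ioc i k := by
      intro i' hi'
      simp only [mem_filter, mem_Icc, mem_Ioc] at hi' ⊢
      refine ⟨?_, hi'.1.2⟩
      by_contra! hi'i
      exact hi'.2 (hA.mem_of_le_of_mem hj hi'.1.1 hi'i)
    have := card_le_card hsub
    rw [Nat.card_Ioc] at this
    exact ⟨h2j, hA.le_of_mem hj, by unfold deficit; omega⟩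
  · rintro ⟨h2j, hji, hik⟩
    by_contra hj
    have hsub : Icc i k ⊆ {i' ∈ Icc j k | j ∉ A i'} := by
      intro i' hi'
      simp only [mem_filter, mem_Icc] at hi' ⊢
      exact ⟨⟨by omega, hi'.2⟩, fun hj' => hj (hA.mem_of_le_of_mem hj' hji hi'.1)⟩
    have := card_le_card hsub
    rw [Nat.card_Icc] at this
    unfold deficit at hik
    omega

lemma ext_of_deficit (hA : IsCodeWord m k A) (hB : IsCodeWord m k B)
    (h : ∀ j, 2 ≤ j → j ≤ k → deficit k A j = deficit k B j) : A = B := by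
  funext i
  ext j
  rw [hA.mem_iff, hB.mem_iff]
  by_cases hj : 2 ≤ j ∧ j ≤ k
  · rw [h j hj.1 hj.2]
  · omega

lemma deficit_eq_zero_iff (hA : IsCodeWord m k A) {j : ℕ} (h2j : 2 ≤ j) (hjk : j ≤ k + 1) :
    deficit k A j = 0 ↔ j ∈ insert (k + 1) (A k) := by
  rcases eq_or_lt_of_le hjk with rfl | hjk
  · simp [deficit]
  · rw [mem_insert, hA.mem_iff]
    omega

lemma eq_of_codeParent_eq (hA : IsCodeWord m k A) (hB : IsCodeWord m k B)
    (h : ∀ v, v ≠ 0 → codeParent k A v = codeParent k B v) : A = B := by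
  refine hA.ext_of_deficit hB fun j h2j hjk => ?_
  have hv : (⟨k + 2 - j, by omega⟩ : Fin (k + 1)) ≠ 0 :=
    Fin.val_ne_zero_iff.1 (show k + 2 - j ≠ 0 by omega)
  have := congrArg Fin.val (h _ hv)
  rwa [codeParent_val, codeParent_val, show k + 2 - (k + 2 - j) = j by omega] at this

lemma ncard_codeParent_eq_zero (hA : IsCodeWord m k A) (hk : 1 ≤ k) :
    {v : Fin (k + 1) | v ≠ 0 ∧ codeParent k A v = 0}.ncard = #(A k) + 1 := by
  have hk1 : k + 1 ∉ A k := fun h => by have := hA.le_of_mem h; omega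
  rw [← card_insert_of_notMem hk1, ← Set.ncard_coe_finset]
  refine Set.ncard_congr (fun v _ => k + 2 - v) ?_ ?_ ?_
  · rintro v ⟨hv, hpv⟩
    have hv' := Fin.val_ne_zero_iff.2 hv
    have := v.isLt
    exact (hA.deficit_eq_zero_iff (by omega) (by omega)).1 (congrArg Fin.val hpv)
  · intro v w _ _ hvw
    have := v.isLt
    have := w.isLt
    ext
    omega
  · intro j hj
    have hj2 : 2 ≤ j ∧ j ≤ k + 1 := by
      rcases mem_insert.1 hj with rfl | hj
      · omega
      · exact ⟨(hA.mem_bounds hj).2.2, (hA.le_of_mem hj).trans k.le_succ⟩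
    have hv : (⟨k + 2 - j, by omega⟩ : Fin (k + 1)) ≠ 0 :=
      Fin.val_ne_zero_iff.1 (show k + 2 - j ≠ 0 by omega)
    refine ⟨_, ⟨hv, Fin.ext ?_⟩, show k + 2 - (k + 2 - j) = j by omega⟩
    rw [codeParent_val, Fin.val_zero, show k + 2 - (k + 2 - j) = j by omega]
    exact (hA.deficit_eq_zero_iff hj2.1 hj2.2).2 hj

end IsCodeWord

lemma exists_codeParent_eq {m k : ℕ} (hkm : k ≤ m) {p : Fin (k + 1) → Fin (k + 1)}
    (hp : ∀ v, v ≠ 0 → p v < v) :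
    ∃ A, IsCodeWord m k A ∧ ∀ v, v ≠ 0 → codeParent k A v = p v := by
  refine ⟨ofDeficit k fun j => p (Fin.ofNat (k + 1) (k + 2 - j)), isCodeWord_ofDeficit hkm _,
    fun v hv => ?_⟩
  have hj : Fin.ofNat (k + 1) (k + 2 - (k + 2 - v)) = v := by
    rw [show k + 2 - (k + 2 - v) = (v : ℕ) by omega, Fin.ofNat_val_eq_self]
  have hpv : (p v : ℕ) < v := hp v hv
  have := v.isLt
  ext
  rw [codeParent_val, deficit_ofDeficit (by omega) (by simp only [hj]; omega), hj]

theorem N_eq_increasingTrees_general (m k r : ℕ) (hk1 : 1 ≤ k) (hkm : k ≤ m) :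
    N m k r =
      {G : SimpleGraph (Fin (k + 1)) |
        IsIncreasingTree G ∧ (G.neighborSet 0).ncard = r + 1}.ncard := by
  have hpA (A : ℕ → Finset ℕ) : ∀ v, v ≠ 0 → codeParent k A v < v := fun _ => codeParent_lt k A
  refine Set.ncard_congr (fun A _ => parentGraph (codeParent k A)) ?_ ?_ ?_
  · rintro A ⟨hA, rfl⟩
    refine ⟨isIncreasingTree_parentGraph (hpA A), ?_⟩
    rw [neighborSet_parentGraph_zero (hpA A), hA.ncard_codeParent_eq_zero hk1]
  · rintro A B ⟨hA, -⟩ ⟨hB, -⟩ h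
    exact hA.eq_of_codeParent_eq hB ((parentGraph_inj (hpA A) (hpA B)).1 h)
  · rintro G ⟨hG, hdeg⟩
    obtain ⟨p, hp, rfl⟩ := hG.exists_parentGraph_eq
    obtain ⟨A, hA, hAp⟩ := exists_codeParent_eq hkm hp
    have hAG : parentGraph (codeParent k A) = parentGraph p := (parentGraph_inj (hpA A) hp).2 hAp
    refine ⟨A, ⟨hA, ?_⟩, hAG⟩
    rw [← hAG, neighborSet_parentGraph_zero (hpA A), hA.ncard_codeParent_eq_zero hk1] at hdeg
    omega

/-- For `1 ≤ k ≤ m` and `0 ≤ r ≤ k - 1`, the number of code words of length `k`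
over base dimension `m` whose last set has cardinality `r` equals the number of
increasing trees on `{0, 1, …, k}` in which the root `0` has degree `r + 1`. -/
theorem N_eq_increasingTrees (m k r : ℕ) (hm : 2 ≤ m) (hk1 : 1 ≤ k) (hkm : k ≤ m)
    (hr : r ≤ k - 1) :
    N m k r =
      {G : SimpleGraph (Fin (k + 1)) |
        IsIncreasingTree G ∧ (G.neighborSet 0).ncard = r + 1}.ncard :=
  N_eq_increasingTrees_general m k r hk1 hkm
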